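/- For all integers 1 ≤ s ≤ k and all indices i, j ∈ {1,…,N}, the entries of the product of consensus matrices satisfy | 1/N − (Φ_{k:s})_{ij} | ≤ 2·(1 + β^{−NB})/(1 − β^{NB}) · (1 − β^{NB})^{(k−s)/(NB)}. (Lemma 2 of the paper, from Nedić–Ozdaglar.) -/

import Mathlib

/-!
Write `δ = β ^ (N * B)`. Because every factor has a positive diagonal, positive entries of a
row of a running product stay positive; within a connectivity block some positive entry leads
from the current support of the row to an index outside it, so the support grows by one per
block. Hence every product of `N * B` consecutive factors is entrywise positive, and then
entrywise at least `δ`. A stochastic matrix with entries at least `δ` contracts the oscillation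
`max - min` of a vector by `1 - δ`, so column `j` of `Φ_{k:s}` has oscillation at most
`(1 - δ) ^ ⌊(k + 1 - s) / (N * B)⌋`; as the column sums to `1`, its mean `1 / N` lies between its
extremes. Passing from the floor to the real exponent costs one factor `1 - δ`.
-/

open Finset Matrix

lemma Relation.ReflTransGen.exists_rel_mem_notMem {α : Type*} {r : α → α → Prop} {s : Set α}
    {a b : α} (h : Relation.ReflTransGen r a b) (ha : a ∈ s) (hb : b ∉ s) :
    ∃ u ∈ s, ∃ v ∉ s, r u v := by
  induction h with
  | refl => exact absurd ha hb
  | @tail c d _ hcd ih => by_cases hc : c ∈ s; exacts [⟨c, hc, d, hb, hcd⟩, ih hc]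

variable {n : Type*} [Fintype n]

section Window

variable [DecidableEq n] {R : Type*} [Semiring R]

def windowProd (P : ℕ → Matrix n n R) (a b : ℕ) : Matrix n n R := ((List.range' a b).map P).prod

variable (P : ℕ → Matrix n n R)

@[simp]
lemma windowProd_zero (a : ℕ) : windowProd P a 0 = 1 := rfl

lemma windowProd_add (a b c : ℕ) :
    windowProd P a (b + c) = windowProd P a b * windowProd P (a + b) c := by
  rw [windowProd, windowProd, windowProd, ← List.range'_append_1, List.map_append, List.prod_append]

lemma windowProd_mem {S : Submonoid (Matrix n n R)} {a : ℕ} (hP : ∀ k, a ≤ k → P k ∈ S) (b : ℕ) :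
    windowProd P a b ∈ S :=
  Submonoid.list_prod_mem _ fun M hM => by
    obtain ⟨k, hk, rfl⟩ := List.mem_map.1 hM
    exact hP k (List.mem_range'_1.1 hk).1

end Window

section Oscillation

variable [Nonempty n] {R : Type*} [Field R] [LinearOrder R] [IsStrictOrderedRing R]

def osc (v : n → R) : R := univ.sup' univ_nonempty v - univ.inf' univ_nonempty v

lemma abs_mean_sub_le_osc (v : n → R) (i : n) :
    |(∑ l, v l) / Fintype.card n - v i| ≤ osc v := by
  have hcard : (0 : R) < Fintype.card n := by exact_mod_cast Fintype.card_pos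
  have hlo : Fintype.card n * univ.inf' univ_nonempty v ≤ ∑ l, v l := by
    simpa using card_nsmul_le_sum univ v _ fun l _ => inf'_le v (mem_univ l)
  have hhi : ∑ l, v l ≤ Fintype.card n * univ.sup' univ_nonempty v := by
    simpa using sum_le_card_nsmul univ v _ fun l _ => le_sup' v (mem_univ l)
  have hmean_lo : univ.inf' univ_nonempty v ≤ (∑ l, v l) / Fintype.card n := by
    rw [le_div_iff₀ hcard]; linarith
  have hmean_hi : (∑ l, v l) / Fintype.card n ≤ univ.sup' univ_nonempty v := by
    rw [div_le_iff₀ hcard]; linarith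
  rw [abs_le, osc]
  constructor <;> linarith [inf'_le v (mem_univ i), le_sup' v (mem_univ i)]

lemma osc_le_one {v : n → R} (h0 : ∀ l, 0 ≤ v l) (h1 : ∀ l, v l ≤ 1) : osc v ≤ 1 := by
  have hsup : univ.sup' univ_nonempty v ≤ 1 := sup'_le _ _ fun l _ => h1 l
  have hinf : 0 ≤ univ.inf' univ_nonempty v := le_inf' _ _ fun l _ => h0 l
  rw [osc]; linarith

variable [DecidableEq n]

/-- Each row of `A` puts weight at least `δ` on the coordinates where `v` is minimal and maximal,
so every entry of `A *ᵥ v` stays `δ * osc v` away from both extremes of `v`. -/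
lemma osc_mulVec_le {A : Matrix n n R} (hA : A ∈ rowStochastic R n) {δ : R} (hδ : 0 ≤ δ)
    (hAδ : ∀ i l, δ ≤ A i l) (v : n → R) : osc (A *ᵥ v) ≤ (1 - δ) * osc v := by
  set S := univ.sup' univ_nonempty v
  set I := univ.inf' univ_nonempty v
  obtain ⟨lmin, -, hlmin⟩ := exists_mem_eq_inf' univ_nonempty v
  obtain ⟨lmax, -, hlmax⟩ := exists_mem_eq_sup' univ_nonempty v
  have hIS : I ≤ S := (inf'_le v (mem_univ lmin)).trans (le_sup' v (mem_univ lmin))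
  have hweight (i : n) (w : n → R) (hw : ∀ l, 0 ≤ w l) (l₀ : n) :
      δ * w l₀ ≤ ∑ l, A i l * w l :=
    (mul_le_mul_of_nonneg_right (hAδ i l₀) (hw l₀)).trans <|
      single_le_sum (f := fun l => A i l * w l)
        (fun l _ => mul_nonneg (nonneg_of_mem_rowStochastic hA) (hw l)) (mem_univ l₀)
  have hrow (i : n) (c : R) : ∑ l, A i l * c = c := by
    rw [← sum_mul, sum_row_of_mem_rowStochastic hA i, one_mul]
  have hupper (i : n) : (A *ᵥ v) i ≤ S - δ * (S - I) := by
    have := hweight i (fun l => S - v l) (fun l => sub_nonneg.2 (le_sup' v (mem_univ l))) lmin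
    simp only [mul_sub, sum_sub_distrib, hrow, ← hlmin] at this
    simp only [mulVec, dotProduct]; linarith
  have hlower (i : n) : I + δ * (S - I) ≤ (A *ᵥ v) i := by
    have := hweight i (fun l => v l - I) (fun l => sub_nonneg.2 (inf'_le v (mem_univ l))) lmax
    simp only [mul_sub, sum_sub_distrib, hrow, ← hlmax] at this
    simp only [mulVec, dotProduct]; linarith
  have hsup := sup'_le univ_nonempty (A *ᵥ v) fun i _ => hupper i
  have hinf := le_inf' univ_nonempty (A *ᵥ v) fun i _ => hlower i
  rw [osc, osc]
  nlinarith [mul_nonneg hδ (sub_nonneg.2 hIS)]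

lemma one_sub_nonneg_of_le_apply {A : Matrix n n R} (hA : A ∈ rowStochastic R n) {δ : R}
    (hAδ : ∀ i l, δ ≤ A i l) : 0 ≤ 1 - δ := by
  obtain ⟨i⟩ := ‹Nonempty n›
  exact sub_nonneg.2 ((hAδ i i).trans (le_one_of_mem_rowStochastic hA))

lemma osc_windowProd_mulVec_le {P : ℕ → Matrix n n R} {a L : ℕ} {δ : R} (hδ : 0 ≤ δ)
    (hP : ∀ k, a ≤ k → P k ∈ rowStochastic R n)
    (hW : ∀ t, a ≤ t → ∀ i l, δ ≤ windowProd P t L i l) (c : ℕ) (v : n → R) :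
    osc (windowProd P a (c * L) *ᵥ v) ≤ (1 - δ) ^ c * osc v := by
  induction c generalizing a with
  | zero => simp
  | succ c ih =>
    have hWa : windowProd P a L ∈ rowStochastic R n := windowProd_mem P hP L
    rw [add_one_mul, add_comm, windowProd_add, ← mulVec_mulVec, pow_succ', mul_assoc]
    calc osc (windowProd P a L *ᵥ windowProd P (a + L) (c * L) *ᵥ v)
        ≤ (1 - δ) * osc (windowProd P (a + L) (c * L) *ᵥ v) :=
          osc_mulVec_le hWa hδ (hW a le_rfl) _
      _ ≤ (1 - δ) * ((1 - δ) ^ c * osc v) :=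
          mul_le_mul_of_nonneg_left
            (ih (fun k hk => hP k (by omega)) (fun t ht => hW t (by omega)))
            (one_sub_nonneg_of_le_apply hWa (hW a le_rfl))

lemma abs_inv_card_sub_windowProd_apply_le {P : ℕ → Matrix n n R} {a L : ℕ} {δ : R} (hδ : 0 ≤ δ)
    (hP : ∀ k, a ≤ k → P k ∈ doublyStochastic R n)
    (hW : ∀ t, a ≤ t → ∀ i l, δ ≤ windowProd P t L i l) (b : ℕ) (i j : n) :
    |1 / Fintype.card n - windowProd P a b i j| ≤ (1 - δ) ^ (b / L) := by
  have hProw (k : ℕ) (hk : a ≤ k) : P k ∈ rowStochastic R n :=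
    (mem_doublyStochastic_iff_mem_rowStochastic_and_mem_colStochastic.1 (hP k hk)).1
  set c := b / L
  set W := windowProd P (a + c * L) (b - c * L)
  have hsplit : windowProd P a b = windowProd P a (c * L) * W := by
    rw [← windowProd_add, Nat.add_sub_of_le (Nat.div_mul_le_self b L)]
  have hWds : W ∈ doublyStochastic R n := windowProd_mem P (fun k hk => hP k (by omega)) _
  have hcol : ∑ l, windowProd P a b l j = 1 :=
    sum_col_of_mem_doublyStochastic (windowProd_mem P hP b) j
  calc |1 / Fintype.card n - windowProd P a b i j| ≤ osc fun l => windowProd P a b l j := by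
        simpa [hcol] using abs_mean_sub_le_osc (fun l => windowProd P a b l j) i
    _ = osc (windowProd P a (c * L) *ᵥ fun l => W l j) := by rw [hsplit]; rfl
    _ ≤ (1 - δ) ^ c * osc fun l => W l j := osc_windowProd_mulVec_le hδ hProw hW c _
    _ ≤ (1 - δ) ^ c := mul_le_of_le_one_right
        (pow_nonneg (one_sub_nonneg_of_le_apply (windowProd_mem P hProw L) (hW a le_rfl)) c)
        (osc_le_one (fun l => nonneg_of_mem_doublyStochastic hWds)
          (fun l => le_one_of_mem_doublyStochastic hWds))

end Oscillation

section Positivity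

variable {R : Type*} [CommSemiring R] [LinearOrder R] [IsStrictOrderedRing R]

def rowSupport (A : Matrix n n R) (i : n) : Finset n := {j | 0 < A i j}

omit [IsStrictOrderedRing R] in
@[simp]
lemma mem_rowSupport {A : Matrix n n R} {i j : n} : j ∈ rowSupport A i ↔ 0 < A i j := by
  simp [rowSupport]

lemma mul_apply_pos {A M : Matrix n n R} (hA : ∀ i j, 0 ≤ A i j) (hM : ∀ i j, 0 ≤ M i j)
    {i u v : n} (hiu : 0 < A i u) (huv : 0 < M u v) : 0 < (A * M) i v :=
  sum_pos' (fun l _ => mul_nonneg (hA i l) (hM l v)) ⟨u, mem_univ u, mul_pos hiu huv⟩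

variable [DecidableEq n]

def nonnegPosDiag (R n : Type*) [Fintype n] [DecidableEq n] [CommSemiring R] [LinearOrder R]
    [IsStrictOrderedRing R] : Submonoid (Matrix n n R) where
  carrier := {M | (∀ i j, 0 ≤ M i j) ∧ ∀ i, 0 < M i i}
  mul_mem' hM hN := ⟨fun i j => sum_nonneg fun l _ => mul_nonneg (hM.1 _ _) (hN.1 _ _),
    fun i => mul_apply_pos hM.1 hN.1 (hM.2 i) (hN.2 i)⟩
  one_mem' := ⟨fun i j => by by_cases h : i = j <;> simp [one_apply, h], fun i => by simp⟩

lemma list_prod_apply_pos_of_mem {L : List (Matrix n n R)} (hL : ∀ M ∈ L, M ∈ nonnegPosDiag R n)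
    {M : Matrix n n R} (hM : M ∈ L) {u v : n} (huv : 0 < M u v) : 0 < L.prod u v := by
  induction L with
  | nil => simp at hM
  | cons M' L ih =>
    have hM' : M' ∈ nonnegPosDiag R n := hL M' List.mem_cons_self
    have hL' : L.prod ∈ nonnegPosDiag R n :=
      Submonoid.list_prod_mem _ fun N hN => hL N (List.mem_cons_of_mem _ hN)
    rw [List.prod_cons]
    rcases List.mem_cons.1 hM with rfl | hM
    · exact mul_apply_pos hM'.1 hL'.1 huv (hL'.2 v)
    · exact mul_apply_pos hM'.1 hL'.1 (hM'.2 u)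
        (ih (fun N hN => hL N (List.mem_cons_of_mem _ hN)) hM)

lemma min_card_rowSupport_add_one_le {A : Matrix n n R} (hA : A ∈ nonnegPosDiag R n)
    {L : List (Matrix n n R)} (hL : ∀ M ∈ L, M ∈ nonnegPosDiag R n)
    (hconn : ∀ a b, Relation.ReflTransGen (fun a b => ∃ M ∈ L, 0 < M a b) a b) (i : n) :
    min (#(rowSupport A i) + 1) (Fintype.card n) ≤ #(rowSupport (A * L.prod) i) := by
  have hprod : L.prod ∈ nonnegPosDiag R n := Submonoid.list_prod_mem _ hL
  have hsub : rowSupport A i ⊆ rowSupport (A * L.prod) i := fun j hj =>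
    mem_rowSupport.2 (mul_apply_pos hA.1 hprod.1 (mem_rowSupport.1 hj) (hprod.2 j))
  by_cases hfull : rowSupport A i = univ
  · rw [hfull, univ_subset_iff] at hsub
    rw [hsub, card_univ]
    omega
  obtain ⟨y, hy⟩ : ∃ y, y ∉ rowSupport A i := by simpa [eq_univ_iff_forall] using hfull
  obtain ⟨u, hu, v, hv, M, hM, huv⟩ :=
    (hconn i y).exists_rel_mem_notMem (s := ↑(rowSupport A i)) (by simpa using hA.2 i) hy
  have hv' : v ∈ rowSupport (A * L.prod) i := mem_rowSupport.2 <|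
    mul_apply_pos hA.1 hprod.1 (mem_rowSupport.1 hu) (list_prod_apply_pos_of_mem hL hM huv)
  have := card_lt_card ((ssubset_iff_of_subset hsub).2 ⟨v, hv', hv⟩)
  omega

lemma list_prod_apply_nonneg {L : List (Matrix n n R)} (hL : ∀ M ∈ L, ∀ i j, 0 ≤ M i j)
    (i j : n) : 0 ≤ L.prod i j := by
  induction L generalizing i with
  | nil => by_cases h : i = j <;> simp [one_apply, h]
  | cons M L ih =>
    exact sum_nonneg fun l _ => mul_nonneg (hL M List.mem_cons_self i l)
      (ih (fun N hN => hL N (List.mem_cons_of_mem _ hN)) l)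

lemma pow_length_le_list_prod_apply {β : R} (hβ : 0 ≤ β) {L : List (Matrix n n R)}
    (hnn : ∀ M ∈ L, ∀ i j, 0 ≤ M i j) (hβL : ∀ M ∈ L, ∀ i j, 0 < M i j → β ≤ M i j) {i j : n}
    (h : 0 < L.prod i j) : β ^ L.length ≤ L.prod i j := by
  induction L generalizing i with
  | nil =>
    by_cases hij : i = j
    · simp [hij]
    · simp [one_apply, hij] at h
  | cons M L ih =>
    have hnnL : ∀ N ∈ L, ∀ i j, 0 ≤ N i j := fun N hN => hnn N (List.mem_cons_of_mem _ hN)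
    have hterm (l : n) : 0 ≤ M i l * L.prod l j :=
      mul_nonneg (hnn M List.mem_cons_self i l) (list_prod_apply_nonneg hnnL l j)
    rw [List.prod_cons] at h ⊢
    obtain ⟨l, -, hl⟩ := (sum_pos_iff_of_nonneg fun l _ => hterm l).1 h
    have hMil : 0 < M i l := (hnn M List.mem_cons_self i l).lt_of_ne' (left_ne_zero_of_mul hl.ne')
    have hLlj : 0 < L.prod l j :=
      (list_prod_apply_nonneg hnnL l j).lt_of_ne' (right_ne_zero_of_mul hl.ne')
    calc β ^ (M :: L).length = β * β ^ L.length := by rw [List.length_cons, pow_succ']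
      _ ≤ M i l * L.prod l j :=
        mul_le_mul (hβL M List.mem_cons_self i l hMil)
          (ih hnnL (fun N hN => hβL N (List.mem_cons_of_mem _ hN)) hLlj) (pow_nonneg hβ _)
          hMil.le
      _ ≤ (M * L.prod) i j := single_le_sum (fun l _ => hterm l) (mem_univ l)

lemma pow_le_windowProd_apply {P : ℕ → Matrix n n R} {β : R} (hβ : 0 ≤ β) {a : ℕ}
    (hnn : ∀ k, a ≤ k → ∀ i j, 0 ≤ P k i j) (hβP : ∀ k, a ≤ k → ∀ i j, 0 < P k i j → β ≤ P k i j)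
    (b : ℕ) {i j : n} (h : 0 < windowProd P a b i j) : β ^ b ≤ windowProd P a b i j := by
  have hmem {M : Matrix n n R} (hM : M ∈ (List.range' a b).map P) : ∃ k, a ≤ k ∧ P k = M := by
    obtain ⟨k, hk, rfl⟩ := List.mem_map.1 hM
    exact ⟨k, (List.mem_range'_1.1 hk).1, rfl⟩
  simpa [windowProd] using pow_length_le_list_prod_apply hβ
    (fun M hM => by obtain ⟨k, hk, rfl⟩ := hmem hM; exact hnn k hk)
    (fun M hM => by obtain ⟨k, hk, rfl⟩ := hmem hM; exact hβP k hk) h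

end Positivity

section Connectivity

variable [DecidableEq n] {R : Type*} [CommSemiring R] [LinearOrder R] [IsStrictOrderedRing R]
  {P : ℕ → Matrix n n R} {B : ℕ}

lemma min_card_rowSupport_add_le_mul_windowProd (hP : ∀ k, 1 ≤ k → P k ∈ nonnegPosDiag R n)
    (hconn : ∀ m : ℕ, ∀ a b : n, Relation.ReflTransGen
      (fun a b => ∃ k ∈ Finset.Icc (m * B + 1) ((m + 1) * B), 0 < P k a b) a b)
    {A : Matrix n n R} (hA : A ∈ nonnegPosDiag R n) (i : n) (m c : ℕ) :
    min (#(rowSupport A i) + c) (Fintype.card n) ≤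
      #(rowSupport (A * windowProd P (m * B + 1) (c * B)) i) := by
  induction c generalizing A m with
  | zero => simp
  | succ c ih =>
    have hsplit : windowProd P (m * B + 1) ((c + 1) * B) =
        windowProd P (m * B + 1) B * windowProd P ((m + 1) * B + 1) (c * B) := by
      rw [add_one_mul, add_comm (c * B), windowProd_add, add_one_mul, add_right_comm]
    have hblock : min (#(rowSupport A i) + 1) (Fintype.card n) ≤
        #(rowSupport (A * windowProd P (m * B + 1) B) i) := min_card_rowSupport_add_one_le hA
      (L := (List.range' (m * B + 1) B).map P)
      (fun M hM => by
        obtain ⟨k, hk, rfl⟩ := List.mem_map.1 hM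
        exact hP k (by grind))
      (fun a b => Relation.ReflTransGen.mono (fun u v ⟨k, hk, huv⟩ =>
        ⟨P k, List.mem_map_of_mem (List.mem_range'_1.2 (by rw [Finset.mem_Icc] at hk; grind)),
          huv⟩) a b (hconn m a b)) i
    have := ih (mul_mem hA (windowProd_mem P (a := m * B + 1) (fun k hk => hP k (by omega)) B))
      (m + 1)
    rw [hsplit, ← mul_assoc]
    exact le_trans (by omega) this

lemma windowProd_apply_pos (hB : 1 ≤ B) (hP : ∀ k, 1 ≤ k → P k ∈ nonnegPosDiag R n)
    (hconn : ∀ m : ℕ, ∀ a b : n, Relation.ReflTransGen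
      (fun a b => ∃ k ∈ Finset.Icc (m * B + 1) ((m + 1) * B), 0 < P k a b) a b)
    {t : ℕ} (ht : 1 ≤ t) (i j : n) : 0 < windowProd P t (Fintype.card n * B) i j := by
  obtain ⟨d, hd⟩ : ∃ d, Fintype.card n = d + 1 :=
    Nat.exists_eq_add_one.2 (Fintype.card_pos_iff.2 ⟨i⟩)
  -- `m` is the first connectivity block starting in `[t, t + B)`, so the window contains the
  -- complete blocks `m, …, m + d - 1`.
  set m := (t + B - 2) / B
  have hm_le : m * B ≤ t + B - 2 := Nat.div_mul_le_self _ _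
  have hm_gt : t + B - 2 < m * B + B := Nat.lt_div_mul_add (by omega)
  have hsplit : windowProd P t (Fintype.card n * B) =
      windowProd P t (m * B + 1 - t) * windowProd P (m * B + 1) (d * B) *
        windowProd P (m * B + 1 + d * B) (t + B - (m * B + 1)) := by
    have hlen : Fintype.card n * B = (m * B + 1 - t) + (d * B + (t + B - (m * B + 1))) := by
      rw [hd, add_one_mul]; omega
    rw [hlen, windowProd_add, show t + (m * B + 1 - t) = m * B + 1 by omega, windowProd_add,
      mul_assoc]
  have hS (a : ℕ) (ha : 1 ≤ a) (b : ℕ) : windowProd P a b ∈ nonnegPosDiag R n :=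
    windowProd_mem P (fun k hk => hP k (ha.trans hk)) b
  have hfull := min_card_rowSupport_add_le_mul_windowProd hP hconn (hS t ht (m * B + 1 - t)) i m d
  have hi : 1 ≤ #(rowSupport (windowProd P t (m * B + 1 - t)) i) :=
    card_pos.2 ⟨i, mem_rowSupport.2 ((hS t ht _).2 i)⟩
  have huniv : rowSupport (windowProd P t (m * B + 1 - t) * windowProd P (m * B + 1) (d * B)) i
      = univ := eq_univ_of_card _ (le_antisymm (card_le_univ _) (by omega))
  rw [hsplit]
  exact mul_apply_pos (mul_mem (hS t ht _) (hS _ (by omega) _)).1 (hS _ (by omega) _).1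
    (mem_rowSupport.1 (huniv ▸ mem_univ j)) ((hS _ (by omega) _).2 j)

end Connectivity

lemma pow_le_rpow_div {q x : ℝ} (hq0 : 0 < q) (hq1 : q ≤ 1) {c : ℕ} (hx : x < c + 1) :
    q ^ c ≤ q ^ x / q := by
  rw [← Real.rpow_natCast, ← Real.rpow_sub_one hq0.ne']
  exact Real.rpow_le_rpow_of_exponent_ge hq0 hq1 (by linarith)

theorem stmt8_general (N B : ℕ) (hB : 1 ≤ B)
    (β : ℝ) (hβ0 : 0 < β) (hβ1 : β < 1)
    (P : ℕ → Matrix (Fin N) (Fin N) ℝ)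
    (hPnn : ∀ k, 1 ≤ k → ∀ i j, 0 ≤ P k i j)
    (hProw : ∀ k, 1 ≤ k → ∀ i, ∑ j, P k i j = 1)
    (hPcol : ∀ k, 1 ≤ k → ∀ j, ∑ i, P k i j = 1)
    (hPdiag : ∀ k, 1 ≤ k → ∀ i, β ≤ P k i i)
    (hPoff : ∀ k, 1 ≤ k → ∀ i j, P k i j ≠ 0 → β ≤ P k i j)
    (hconn : ∀ m : ℕ, ∀ i j : Fin N,
      Relation.ReflTransGen
        (fun a b => ∃ k ∈ Finset.Icc (m * B + 1) ((m + 1) * B), 0 < P k a b) i j)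
    (Phi : ℕ → ℕ → Matrix (Fin N) (Fin N) ℝ)
    (hPhi : ∀ k s, Phi k s = ((List.range' s (k + 1 - s)).map P).prod) :
    ∀ s k : ℕ, 1 ≤ s → s ≤ k → ∀ i j : Fin N,
      |1 / (N : ℝ) - Phi k s i j| ≤
        2 * (1 + β ^ (-(N * B : ℝ))) / (1 - β ^ (N * B)) *
          (1 - β ^ (N * B)) ^ (((k : ℝ) - (s : ℝ)) / (N * B)) := by
  intro s k hs hsk i j
  have : Nonempty (Fin N) := ⟨i⟩
  have hNB : 0 < N * B := Nat.mul_pos i.pos hB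
  have hwindow (t : ℕ) (ht : s ≤ t) (a b : Fin N) : β ^ (N * B) ≤ windowProd P t (N * B) a b := by
    have hpos := windowProd_apply_pos hB
      (fun k hk => ⟨hPnn k hk, fun a => hβ0.trans_le (hPdiag k hk a)⟩) hconn (t := t) (by omega) a b
    rw [Fintype.card_fin] at hpos
    exact pow_le_windowProd_apply hβ0.le (fun k hk => hPnn k (by omega))
      (fun k hk a b h => hPoff k (by omega) a b h.ne') _ hpos
  have hbound := abs_inv_card_sub_windowProd_apply_le (by positivity)
    (fun k hk => mem_doublyStochastic_iff_sum.2 ⟨hPnn k (hs.trans hk), hProw k (hs.trans hk),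
      hPcol k (hs.trans hk)⟩) hwindow (k + 1 - s) i j
  have hq0 : 0 < 1 - β ^ (N * B) := sub_pos.2 (pow_lt_one₀ hβ0.le hβ1 hNB.ne')
  have hx : ((k : ℝ) - (s : ℝ)) / (N * B) < ((k + 1 - s) / (N * B) : ℕ) + 1 := by
    have : k + 1 - s < (k + 1 - s) / (N * B) * (N * B) + N * B := Nat.lt_div_mul_add hNB
    rw [div_lt_iff₀ (by exact_mod_cast hNB), ← Nat.cast_sub hsk]
    exact_mod_cast (by grind : k - s < ((k + 1 - s) / (N * B) + 1) * (N * B))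
  calc |1 / (N : ℝ) - Phi k s i j| ≤ (1 - β ^ (N * B)) ^ ((k + 1 - s) / (N * B)) := by
        simpa [hPhi, windowProd] using hbound
    _ ≤ (1 - β ^ (N * B)) ^ (((k : ℝ) - (s : ℝ)) / (N * B)) / (1 - β ^ (N * B)) :=
        pow_le_rpow_div hq0 (by linarith [pow_pos hβ0 (N * B)]) hx
    _ ≤ _ := by
      rw [div_mul_eq_mul_div]
      refine div_le_div_of_nonneg_right (le_mul_of_one_le_left (by positivity) ?_) hq0.le
      linarith [Real.rpow_pos_of_pos hβ0 (-(N * B : ℝ))]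

/-- Nedić–Ozdaglar geometric-mixing bound: under the doubly stochastic,
`β`-bounded-entries and `B`-bounded-connectivity assumptions, for all `1 ≤ s ≤ k` and
all indices `i j`, `|1/N − (Φ_{k:s})_{ij}| ≤ 2(1+β^{−NB})/(1−β^{NB})·(1−β^{NB})^{(k−s)/(NB)}`. -/
theorem stmt8 (N B : ℕ) (hN : 2 ≤ N) (hB : 1 ≤ B)
    (β : ℝ) (hβ0 : 0 < β) (hβ1 : β < 1)
    (P : ℕ → Matrix (Fin N) (Fin N) ℝ)
    (hPnn : ∀ k, 1 ≤ k → ∀ i j, 0 ≤ P k i j)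
    (hProw : ∀ k, 1 ≤ k → ∀ i, ∑ j, P k i j = 1)
    (hPcol : ∀ k, 1 ≤ k → ∀ j, ∑ i, P k i j = 1)
    (hPdiag : ∀ k, 1 ≤ k → ∀ i, β ≤ P k i i)
    (hPoff : ∀ k, 1 ≤ k → ∀ i j, P k i j ≠ 0 → β ≤ P k i j)
    (hconn : ∀ m : ℕ, ∀ i j : Fin N,
      Relation.ReflTransGen
        (fun a b => ∃ k ∈ Finset.Icc (m * B + 1) ((m + 1) * B), 0 < P k a b) i j)
    (Phi : ℕ → ℕ → Matrix (Fin N) (Fin N) ℝ)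
    (hPhi : ∀ k s, Phi k s = ((List.range' s (k + 1 - s)).map P).prod) :
    ∀ s k : ℕ, 1 ≤ s → s ≤ k → ∀ i j : Fin N,
      |1 / (N : ℝ) - Phi k s i j| ≤
        2 * (1 + β ^ (-(N * B : ℝ))) / (1 - β ^ (N * B)) *
          (1 - β ^ (N * B)) ^ (((k : ℝ) - (s : ℝ)) / (N * B)) :=
  stmt8_general N B hB β hβ0 hβ1 P hPnn hProw hPcol hPdiag hPoff hconn Phi hPhi
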